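/- Let R be a nonassociative ring with additive maps σ, δ satisfying σ(1)=1 and δ(1)=0. If σ is bijective, then the generalized polynomial ring R[X;σ,δ] is a generalized nonassociative Ore extension of R; in particular, {1,X,X²,...} is a basis of R[X;σ,δ] as a free right R-module and (X^m R)(X^n R) ⊆ R + XR + ... + X^{m+n}R for all m,n ∈ ℕ. -/

import Mathlib

open Finset
open scoped Classical

section Defs

variable {R : Type*} {S : Type*}

/-- Iterated power: `pw x 0 = 1`, `pw x (n+1) = pw x n * x`. -/
def pw [One S] [Mul S] (x : S) : ℕ → S
  | 0 => 1
  | n + 1 => pw x n * x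

/-- `x` is power-associative. -/
def PowAssoc [One S] [Mul S] (x : S) : Prop := ∀ m n : ℕ, pw x m * pw x n = pw x (m + n)

variable [NonAssocRing R] [NonAssocRing S]

/-- Interpret a finitely supported coefficient family as a left polynomial `Σ f(cᵢ)·xⁱ`. -/
noncomputable def lpoly (f : R →+* S) (x : S) (c : ℕ →₀ R) : S :=
  c.sum fun i r => f r * pw x i

/-- Right polynomial `Σ xⁱ·f(cᵢ)`. -/
noncomputable def rpoly (f : R →+* S) (x : S) (c : ℕ →₀ R) : S :=
  c.sum fun i r => pw x i * f r

/-- Left degree (`⊥` plays the role of `-∞`), computed from a representation as a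
left polynomial in `x` (unique when `{1,x,x²,…}` is a left basis). -/
noncomputable def degl (f : R →+* S) (x : S) (p : S) : WithBot ℕ :=
  if h : ∃ c : ℕ →₀ R, lpoly f x c = p then (Classical.choose h).support.max else ⊥

/-- Left leading coefficient (`0` for the zero polynomial). -/
noncomputable def lcl (f : R →+* S) (x : S) (p : S) : R :=
  if h : ∃ c : ℕ →₀ R, lpoly f x c = p then
    (Classical.choose h) (WithBot.unbotD 0 (Classical.choose h).support.max) else 0

/-- Right degree. -/
noncomputable def degr (f : R →+* S) (x : S) (p : S) : WithBot ℕ :=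
  if h : ∃ c : ℕ →₀ R, rpoly f x c = p then (Classical.choose h).support.max else ⊥

/-- Right leading coefficient. -/
noncomputable def lcr (f : R →+* S) (x : S) (p : S) : R :=
  if h : ∃ c : ℕ →₀ R, rpoly f x c = p then
    (Classical.choose h) (WithBot.unbotD 0 (Classical.choose h).support.max) else 0

/-- `(S,x)` is a left generalized nonassociative Ore extension of `R`
(with the embedding `f : R →+* S`). -/
structure IsLeftGNOE (f : R →+* S) (x : S) : Prop where
  inj : Function.Injective f
  powAssoc : PowAssoc x
  basis : Function.Bijective (lpoly f x)
  closed : ∀ (m n : ℕ) (r s : R), ∃ c : ℕ →₀ R,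
    lpoly f x c = (f r * pw x m) * (f s * pw x n) ∧ ∀ i, m + n < i → c i = 0

/-- `(S,x)` is a right generalized nonassociative Ore extension of `R`. -/
structure IsRightGNOE (f : R →+* S) (x : S) : Prop where
  inj : Function.Injective f
  powAssoc : PowAssoc x
  basis : Function.Bijective (rpoly f x)
  closed : ∀ (m n : ℕ) (r s : R), ∃ c : ℕ →₀ R,
    rpoly f x c = (pw x m * f r) * (pw x n * f s) ∧ ∀ i, m + n < i → c i = 0

/-- Right ideal of a (nonassociative) ring. -/
def IsRightIdeal (T : Type*) [NonAssocRing T] (I : Set T) : Prop :=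
  (0 : T) ∈ I ∧ (∀ a b, a ∈ I → b ∈ I → a + b ∈ I) ∧ (∀ a, a ∈ I → -a ∈ I) ∧
    ∀ a t, a ∈ I → a * t ∈ I

/-- Left ideal of a (nonassociative) ring. -/
def IsLeftIdeal (T : Type*) [NonAssocRing T] (I : Set T) : Prop :=
  (0 : T) ∈ I ∧ (∀ a b, a ∈ I → b ∈ I → a + b ∈ I) ∧ (∀ a, a ∈ I → -a ∈ I) ∧
    ∀ a t, a ∈ I → t * a ∈ I

/-- The right ideal generated by a set. -/
def rIdealGen (T : Type*) [NonAssocRing T] (G : Set T) : Set T :=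
  ⋂₀ {I : Set T | IsRightIdeal T I ∧ G ⊆ I}

/-- The left ideal generated by a set. -/
def lIdealGen (T : Type*) [NonAssocRing T] (G : Set T) : Set T :=
  ⋂₀ {I : Set T | IsLeftIdeal T I ∧ G ⊆ I}

/-- Right Noetherian: every right ideal is finitely generated. -/
def RightNoeth (T : Type*) [NonAssocRing T] : Prop :=
  ∀ I : Set T, IsRightIdeal T I → ∃ G : Finset T, I = rIdealGen T ↑G

/-- Left Noetherian: every left ideal is finitely generated. -/
def LeftNoeth (T : Type*) [NonAssocRing T] : Prop :=
  ∀ I : Set T, IsLeftIdeal T I → ∃ G : Finset T, I = lIdealGen T ↑G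

/-- `M` is a right `R`-submodule of `S` (via `f`). -/
def IsRightRSub (f : R →+* S) (M : Set S) : Prop :=
  (0 : S) ∈ M ∧ (∀ a b, a ∈ M → b ∈ M → a + b ∈ M) ∧ (∀ a, a ∈ M → -a ∈ M) ∧
    ∀ a r, a ∈ M → a * f r ∈ M

/-- `M` is a left `R`-submodule of `S` (via `f`). -/
def IsLeftRSub (f : R →+* S) (M : Set S) : Prop :=
  (0 : S) ∈ M ∧ (∀ a b, a ∈ M → b ∈ M → a + b ∈ M) ∧ (∀ a, a ∈ M → -a ∈ M) ∧
    ∀ a r, a ∈ M → f r * a ∈ M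

/-- The right `R`-submodule of `S` generated by a set. -/
def rSubGen (f : R →+* S) (G : Set S) : Set S :=
  ⋂₀ {M : Set S | IsRightRSub f M ∧ G ⊆ M}

/-- `s` belongs to the right ideal of `S` generated by `p 0, …, p (n-1)` and admits a
left-degree-additive representation `s = Σⱼ (⋯((p_{iⱼ} s_{j1})s_{j2})⋯)s_{jm}` whose degree
bound `max_j (deg_l p_{iⱼ} + Σₖ deg_l s_{jk})` equals `deg_l s`. -/
def LDegAddMem (f : R →+* S) (x : S) {n : ℕ} (p : Fin n → S) (s : S) : Prop :=
  ∃ L : List (Fin n × List S),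
    s = (L.map fun t => t.2.foldl (· * ·) (p t.1)).sum ∧
    degl f x s
      = (L.map fun t => degl f x (p t.1) + (t.2.map (degl f x)).sum).foldr max ⊥

/-- `s` belongs to the left ideal of `S` generated by `p 0, …, p (n-1)` and admits a
right-degree-additive representation. -/
def RDegAddMem (f : R →+* S) (x : S) {n : ℕ} (p : Fin n → S) (s : S) : Prop :=
  ∃ L : List (Fin n × List S),
    s = (L.map fun t => t.2.foldl (fun b a => a * b) (p t.1)).sum ∧
    degr f x s
      = (L.map fun t => degr f x (p t.1) + (t.2.map (degr f x)).sum).foldr max ⊥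

/-- The left Euclidean division algorithm for `(S,x)` over `R`. -/
def LeftEDA (f : R →+* S) (x : S) : Prop :=
  ∀ (n : ℕ) (p : Fin n → S) (q : S), q ≠ 0 →
    (∀ i, degl f x (p i) ≤ degl f x q) →
    lcl f x q ∈ rIdealGen R (Set.range fun i => lcl f x (p i)) →
    ∃ s, LDegAddMem f x p s ∧ degl f x (q - s) < degl f x q

/-- The right Euclidean division algorithm for `(S,x)` over `R`. -/
def RightEDA (f : R →+* S) (x : S) : Prop :=
  ∀ (n : ℕ) (p : Fin n → S) (q : S), q ≠ 0 →
    (∀ i, degr f x (p i) ≤ degr f x q) →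
    lcr f x q ∈ lIdealGen R (Set.range fun i => lcr f x (p i)) →
    ∃ s, RDegAddMem f x p s ∧ degr f x (q - s) < degr f x q

/-- The maps `πᵢᵐ`: the sum of all `C(m,i)` compositions of `i` copies of `σ`
and `m - i` copies of `δ`. -/
def pimap (σ δ : R → R) : ℕ → ℕ → R → R
  | 0, 0 => id
  | _ + 1, 0 => fun _ => 0
  | 0, m + 1 => fun r => δ (pimap σ δ 0 m r)
  | i + 1, m + 1 => fun r => σ (pimap σ δ i m r) + δ (pimap σ δ (i + 1) m r)

/-- `(S,x)` realizes the generalized polynomial ring `R[X;σ,δ]`: `{1,x,x²,…}` is a left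
`R`-basis and multiplication is given by `(rxᵐ)(sxⁿ) = Σᵢ (r πᵢᵐ(s)) x^{i+n}`. -/
def IsGPolyRing (σ δ : R → R) (f : R →+* S) (x : S) : Prop :=
  Function.Injective f ∧ PowAssoc x ∧ Function.Bijective (lpoly f x) ∧
    ∀ (r s : R) (m n : ℕ),
      (f r * pw x m) * (f s * pw x n)
        = ∑ i ∈ Finset.range (m + 1), f (r * pimap σ δ i m s) * pw x (i + n)

/-- `(S,x)` realizes the flipped generalized polynomial ring `R[X;σ,δ]^fl`:
multiplication is given by `(rxᵐ)(sxⁿ) = Σᵢ τₙ(r, πᵢᵐ(s)) x^{i+n}`. -/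
def IsFlipGPolyRing (σ δ : R → R) (f : R →+* S) (x : S) : Prop :=
  Function.Injective f ∧ PowAssoc x ∧ Function.Bijective (lpoly f x) ∧
    ∀ (r s : R) (m n : ℕ),
      (f r * pw x m) * (f s * pw x n)
        = ∑ i ∈ Finset.range (m + 1),
            f (if Even n then r * pimap σ δ i m s else pimap σ δ i m s * r) * pw x (i + n)

end Defs

section Aux

variable {R : Type*} {S : Type*} [NonAssocRing R] [NonAssocRing S]

lemma lpoly_zero (f : R →+* S) (x : S) : lpoly f x 0 = 0 := Finsupp.sum_zero_index

lemma lpoly_add (f : R →+* S) (x : S) (a b : ℕ →₀ R) :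
    lpoly f x (a + b) = lpoly f x a + lpoly f x b :=
  Finsupp.sum_add_index' (fun i => by simp) (fun i r s => by simp [add_mul])

lemma lpoly_single (f : R →+* S) (x : S) (i : ℕ) (r : R) :
    lpoly f x (Finsupp.single i r) = f r * pw x i :=
  Finsupp.sum_single_index (by simp)

lemma lpoly_sum (f : R →+* S) (x : S) {ι : Type*} (s : Finset ι) (g : ι → ℕ →₀ R) :
    lpoly f x (∑ i ∈ s, g i) = ∑ i ∈ s, lpoly f x (g i) := by
  classical
  induction s using Finset.induction with
  | empty => simp [lpoly_zero]
  | insert _ _ h ih => rw [Finset.sum_insert h, lpoly_add, ih, Finset.sum_insert h]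

lemma rpoly_zero (f : R →+* S) (x : S) : rpoly f x 0 = 0 := Finsupp.sum_zero_index

lemma rpoly_add (f : R →+* S) (x : S) (a b : ℕ →₀ R) :
    rpoly f x (a + b) = rpoly f x a + rpoly f x b :=
  Finsupp.sum_add_index' (fun i => by simp) (fun i r s => by simp [mul_add])

lemma rpoly_single (f : R →+* S) (x : S) (i : ℕ) (r : R) :
    rpoly f x (Finsupp.single i r) = pw x i * f r :=
  Finsupp.sum_single_index (by simp)

section Pimap

variable {σ δ : R → R}
variable (hσadd : ∀ a b : R, σ (a + b) = σ a + σ b)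
variable (hδadd : ∀ a b : R, δ (a + b) = δ a + δ b)

include hσadd in
lemma sigma_zero : σ 0 = 0 := by
  have h : σ 0 = σ 0 + σ 0 := by
    conv_lhs => rw [show (0:R) = 0 + 0 by simp, hσadd]
  exact (left_eq_add.mp h)

include hσadd hδadd in
lemma pimap_zero : ∀ i m, pimap σ δ i m (0 : R) = 0 := by
  have hσ0 := sigma_zero hσadd
  have hδ0 := sigma_zero hδadd
  intro i m
  induction m generalizing i with
  | zero => cases i with
    | zero => rfl
    | succ k => rfl
  | succ m ih => cases i with
    | zero => show δ (pimap σ δ 0 m 0) = 0; rw [ih, hδ0]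
    | succ k =>
        show σ (pimap σ δ k m 0) + δ (pimap σ δ (k+1) m 0) = 0
        rw [ih, ih, hσ0, hδ0, add_zero]

include hσadd hδadd in
lemma pimap_add : ∀ i m (a b : R),
    pimap σ δ i m (a + b) = pimap σ δ i m a + pimap σ δ i m b := by
  intro i m
  induction m generalizing i with
  | zero => cases i with
    | zero => intro a b; rfl
    | succ k => intro a b; show (0:R) = 0 + 0; rw [add_zero]
  | succ m ih => cases i with
    | zero => intro a b
              show δ (pimap σ δ 0 m (a+b)) = δ (pimap σ δ 0 m a) + δ (pimap σ δ 0 m b)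
              rw [ih, hδadd]
    | succ k =>
        intro a b
        show σ (pimap σ δ k m (a+b)) + δ (pimap σ δ (k+1) m (a+b))
          = (σ (pimap σ δ k m a) + δ (pimap σ δ (k+1) m a))
            + (σ (pimap σ δ k m b) + δ (pimap σ δ (k+1) m b))
        rw [ih, ih, hσadd, hδadd]
        abel

include hσadd hδadd in
lemma pimap_gt : ∀ m i (r : R), m < i → pimap σ δ i m r = 0 := by
  have hσ0 := sigma_zero hσadd
  have hδ0 := sigma_zero hδadd
  intro m
  induction m with
  | zero =>
    rintro (_|k) r h
    · omega
    · rfl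
  | succ m ih =>
    rintro (_|k) r h
    · omega
    · show σ (pimap σ δ k m r) + δ (pimap σ δ (k+1) m r) = 0
      rw [ih _ _ (by omega), ih _ _ (by omega), hσ0, hδ0, add_zero]

include hσadd hδadd in
lemma pimap_diag : ∀ m (r : R), pimap σ δ m m r = σ^[m] r := by
  have hδ0 := sigma_zero hδadd
  intro m
  induction m with
  | zero => intro r; rfl
  | succ m ih => intro r
                 show σ (pimap σ δ m m r) + δ (pimap σ δ (m+1) m r) = _
                 rw [ih, pimap_gt hσadd hδadd _ _ _ (Nat.lt_succ_self m), hδ0, add_zero,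
                   Function.iterate_succ_apply']

include hσadd in
lemma iter_sigma_zero : ∀ N, σ^[N] (0 : R) = 0 := by
  intro N
  induction N with
  | zero => rfl
  | succ N ih => rw [Function.iterate_succ_apply', ih, sigma_zero hσadd]

end Pimap

/-- Change-of-basis map: `rpoly f x c = lpoly f x (Amap σ δ c)`. -/
noncomputable def Amap (σ δ : R → R) (c : ℕ →₀ R) : ℕ →₀ R :=
  c.sum fun i r => ∑ j ∈ Finset.range (i + 1), Finsupp.single j (pimap σ δ j i r)

section AmapLemmas

variable {σ δ : R → R}
variable (hσadd : ∀ a b : R, σ (a + b) = σ a + σ b)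
variable (hδadd : ∀ a b : R, δ (a + b) = δ a + δ b)

include hσadd hδadd in
lemma Amap_add (a b : ℕ →₀ R) : Amap σ δ (a + b) = Amap σ δ a + Amap σ δ b :=
  Finsupp.sum_add_index' (fun i => by simp [pimap_zero hσadd hδadd])
    (fun i r s => by simp [pimap_add hσadd hδadd, Finsupp.single_add, Finset.sum_add_distrib])

lemma Amap_apply (c : ℕ →₀ R) (k : ℕ) :
    Amap σ δ c k = ∑ i ∈ c.support, if k ≤ i then pimap σ δ k i (c i) else 0 := by
  rw [Amap, Finsupp.sum_apply, Finsupp.sum]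
  refine Finset.sum_congr rfl fun i _ => ?_
  rw [Finsupp.finset_sum_apply]
  simp only [Finsupp.single_apply]
  rw [Finset.sum_ite_eq' (Finset.range (i+1)) k (fun j => pimap σ δ j i (c i))]
  simp [Nat.lt_succ_iff]

include hσadd hδadd in
lemma Amap_top (N : ℕ) (c : ℕ →₀ R) (hc : ∀ i, N < i → c i = 0) :
    Amap σ δ c N = σ^[N] (c N) := by
  rw [Amap_apply, Finset.sum_eq_single N]
  · rw [if_pos le_rfl, pimap_diag hσadd hδadd]
  · intro i hi hne
    have h : ¬ N ≤ i := fun h =>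
      (Finsupp.mem_support_iff.mp hi) (hc i (lt_of_le_of_ne h (Ne.symm hne)))
    rw [if_neg h]
  · intro hN
    rw [if_pos le_rfl, Finsupp.notMem_support_iff.mp hN, pimap_zero hσadd hδadd]

lemma Amap_bound (N : ℕ) (c : ℕ →₀ R) (hc : ∀ i, N < i → c i = 0) (k : ℕ) (hk : N < k) :
    Amap σ δ c k = 0 := by
  rw [Amap_apply]
  apply Finset.sum_eq_zero
  intro i hi
  have h : ¬ k ≤ i := fun h =>
    (Finsupp.mem_support_iff.mp hi) (hc i (lt_of_lt_of_le hk h))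
  rw [if_neg h]

end AmapLemmas

section Key

variable {σ δ : R → R} (f : R →+* S) (x : S)
variable (hσadd : ∀ a b : R, σ (a + b) = σ a + σ b)
variable (hδadd : ∀ a b : R, δ (a + b) = δ a + δ b)
variable (hmul : ∀ (r s : R) (m n : ℕ),
    (f r * pw x m) * (f s * pw x n)
      = ∑ i ∈ Finset.range (m + 1), f (r * pimap σ δ i m s) * pw x (i + n))

include hmul in
lemma prod_eq (r s : R) (m n : ℕ) :
    (f r * pw x m) * (f s * pw x n)
      = lpoly f x (∑ i ∈ Finset.range (m + 1),
          Finsupp.single (i + n) (r * pimap σ δ i m s)) := by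
  rw [hmul, lpoly_sum]
  exact Finset.sum_congr rfl fun i _ => (lpoly_single f x _ _).symm

include hmul in
lemma xmul (s : R) (m : ℕ) :
    pw x m * f s
      = lpoly f x (∑ i ∈ Finset.range (m + 1), Finsupp.single i (pimap σ δ i m s)) := by
  have h := prod_eq f x hmul 1 s m 0
  simpa [pw, map_one, one_mul, mul_one] using h

include hσadd hδadd hmul in
lemma rpoly_eq (c : ℕ →₀ R) : rpoly f x c = lpoly f x (Amap σ δ c) := by
  rw [rpoly, Amap, Finsupp.sum, Finsupp.sum, lpoly_sum]
  exact Finset.sum_congr rfl fun i _ => xmul f x hmul (c i) i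

variable (hσbij : Function.Bijective σ)

include hσadd hδadd hσbij in
lemma key_inj : ∀ N (c : ℕ →₀ R), (∀ i, N ≤ i → c i = 0) → Amap σ δ c = 0 → c = 0 := by
  intro N
  induction N with
  | zero => intro c hc _; ext i; exact hc i (Nat.zero_le i)
  | succ N ih =>
    intro c hc hA
    have hcN : c N = 0 := by
      have h1 : Amap σ δ c N = σ^[N] (c N) := Amap_top hσadd hδadd N c (fun i hi => hc i hi)
      have h2 : σ^[N] (c N) = 0 := by rw [← h1, hA]; rfl
      exact (hσbij.iterate N).injective (h2.trans (iter_sigma_zero hσadd N).symm)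
    refine ih c (fun i hi => ?_) hA
    rcases eq_or_lt_of_le hi with rfl | hi'
    · exact hcN
    · exact hc i hi'

include hσadd hδadd hmul hσbij in
lemma key_surj : ∀ N (c : ℕ →₀ R), (∀ i, N ≤ i → c i = 0) →
    ∃ c' : ℕ →₀ R, (∀ i, N ≤ i → c' i = 0) ∧ rpoly f x c' = lpoly f x c := by
  intro N
  induction N with
  | zero =>
    intro c hc
    refine ⟨0, fun i _ => rfl, ?_⟩
    have hc0 : c = 0 := by ext i; exact hc i (Nat.zero_le i)
    rw [hc0, rpoly_zero, lpoly_zero]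
  | succ N ih =>
    intro c hc
    obtain ⟨b, hb⟩ := (hσbij.iterate N).surjective (c N)
    have hsb : ∀ i, N < i → (Finsupp.single N b : ℕ →₀ R) i = 0 :=
      fun i hi => Finsupp.single_eq_of_ne (by omega)
    have he : rpoly f x (Finsupp.single N b)
        = lpoly f x (Amap σ δ (Finsupp.single N b)) :=
      rpoly_eq f x hσadd hδadd hmul _
    have heN : Amap σ δ (Finsupp.single N b) N = c N := by
      rw [Amap_top hσadd hδadd N _ hsb, Finsupp.single_eq_same, hb]
    have hd : ∀ i, N ≤ i → (c - Amap σ δ (Finsupp.single N b)) i = 0 := by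
      intro i hi
      rcases eq_or_lt_of_le hi with rfl | hi'
      · rw [Finsupp.sub_apply, heN, sub_self]
      · rw [Finsupp.sub_apply, hc i hi', Amap_bound N _ hsb i hi', sub_self]
    obtain ⟨c'', hc'', hrc⟩ := ih (c - Amap σ δ (Finsupp.single N b)) hd
    refine ⟨c'' + Finsupp.single N b, ?_, ?_⟩
    · intro i hi
      rw [Finsupp.add_apply, hc'' i (by omega), Finsupp.single_eq_of_ne (by omega), add_zero]
    · rw [rpoly_add, hrc, he, ← lpoly_add, sub_add_cancel]

end Key

lemma exists_bound (c : ℕ →₀ R) : ∃ N, ∀ i, N ≤ i → c i = 0 := by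
  refine ⟨c.support.sup id + 1, fun i hi => Finsupp.notMem_support_iff.mp (fun h => ?_)⟩
  have := Finset.le_sup (f := id) h
  simp only [id_eq] at this
  omega

end Aux

/-- if `σ` is bijective then `R[X;σ,δ]` is a GNOE of `R`: `{1,X,X²,…}` is a
right `R`-basis and `(XᵐR)(XⁿR) ⊆ R + XR + ⋯ + X^(m+n)R`. -/
theorem stmt5 {R S : Type*} [NonAssocRing R] [NonAssocRing S] (f : R →+* S) (x : S) (σ δ : R → R)
    (hσadd : ∀ a b : R, σ (a + b) = σ a + σ b) (hδadd : ∀ a b : R, δ (a + b) = δ a + δ b)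
    (hσ1 : σ 1 = 1) (hδ1 : δ 1 = 0)
    (hσbij : Function.Bijective σ)
    (hpoly : IsGPolyRing σ δ f x) :
    Function.Bijective (rpoly f x) ∧
      ∀ (m n : ℕ) (r s : R), ∃ c : ℕ →₀ R,
        rpoly f x c = (pw x m * f r) * (pw x n * f s) ∧ ∀ i, m + n < i → c i = 0 := by
  obtain ⟨hinj, hpa, hbij, hmul⟩ := hpoly
  constructor
  · constructor
    · -- injective
      intro c1 c2 h
      have h1 : lpoly f x (Amap σ δ c1) = lpoly f x (Amap σ δ c2) := by
        rw [← rpoly_eq f x hσadd hδadd hmul, ← rpoly_eq f x hσadd hδadd hmul, h]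
      have h2 : Amap σ δ c1 = Amap σ δ c2 := hbij.injective h1
      have h3 : Amap σ δ c1 = Amap σ δ (c1 - c2) + Amap σ δ c2 := by
        rw [← Amap_add hσadd hδadd, sub_add_cancel]
      rw [h2] at h3
      have h4 : Amap σ δ (c1 - c2) = 0 := (right_eq_add.mp h3)
      obtain ⟨N, hN⟩ := exists_bound (c1 - c2)
      have h5 : c1 - c2 = 0 := key_inj hσadd hδadd hσbij N (c1 - c2) hN h4
      exact sub_eq_zero.mp h5
    · -- surjective
      intro p
      obtain ⟨c, hc⟩ := hbij.surjective p
      obtain ⟨N, hN⟩ := exists_bound c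
      obtain ⟨c', _, hc'⟩ := key_surj f x hσadd hδadd hmul hσbij N c hN
      exact ⟨c', by rw [hc', hc]⟩
  · -- closedness
    intro m n r s
    have h1 : pw x m * f r = ∑ i ∈ Finset.range (m + 1), f (pimap σ δ i m r) * pw x i := by
      have h := hmul 1 r m 0
      simpa [pw, map_one, one_mul, mul_one] using h
    have h2 : pw x n * f s = ∑ j ∈ Finset.range (n + 1), f (pimap σ δ j n s) * pw x j := by
      have h := hmul 1 s n 0
      simpa [pw, map_one, one_mul, mul_one] using h
    have h3 : (pw x m * f r) * (pw x n * f s)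
        = lpoly f x (∑ i ∈ Finset.range (m + 1), ∑ j ∈ Finset.range (n + 1),
            ∑ k ∈ Finset.range (i + 1),
              Finsupp.single (k + j) (pimap σ δ i m r * pimap σ δ k i (pimap σ δ j n s))) := by
      rw [h1, h2, Finset.sum_mul, lpoly_sum]
      refine Finset.sum_congr rfl fun i _ => ?_
      rw [Finset.mul_sum, lpoly_sum]
      refine Finset.sum_congr rfl fun j _ => ?_
      exact prod_eq f x hmul _ _ i j
    have hCb : ∀ t, m + n < t →
        (∑ i ∈ Finset.range (m + 1), ∑ j ∈ Finset.range (n + 1),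
            ∑ k ∈ Finset.range (i + 1),
              Finsupp.single (k + j) (pimap σ δ i m r * pimap σ δ k i (pimap σ δ j n s))) t
          = 0 := by
      intro t ht
      rw [Finsupp.finset_sum_apply]
      apply Finset.sum_eq_zero; intro i hi
      rw [Finsupp.finset_sum_apply]
      apply Finset.sum_eq_zero; intro j hj
      rw [Finsupp.finset_sum_apply]
      apply Finset.sum_eq_zero; intro k hk
      simp only [Finset.mem_range] at hi hj hk
      exact Finsupp.single_eq_of_ne' (by omega)
    obtain ⟨c', hc'b, hc'⟩ := key_surj f x hσadd hδadd hmul hσbij (m + n + 1) _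
      (fun i hi => hCb i (by omega))
    exact ⟨c', by rw [hc', h3], fun i hi => hc'b i (by omega)⟩
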